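/- arXiv:1505.06217 — 7 statements merged into one kernel-verified Lean document; each statement's English description precedes it below -/
import Mathlib

section
/- Let X be a nonempty set (phase space), let S ⊆ X be nonempty, let ρ, ρ̃ : X → ℝ, W : X → ℝ, and let β > 0 and ΔF ∈ ℝ. Assume: (i) ρ(x) > 0 and ρ̃(x) > 0 for all x ∈ S, and ρ(x) = ρ̃(x) = 0 for all x ∉ S; (ii) the generalized Crooks relation exp(β·(W(x) − ΔF)) = ρ(x)/ρ̃(x) holds for all x ∈ S; (iii) the function x ↦ W(x) is bounded above on S. Then the worst-case dissipated work equals (1/β) times the order-∞ Rényi divergence of ρ from ρ̃: sSup { W(x) − ΔF : x ∈ S } = (1/β) · Real.log (sInf { λ : ℝ | ∀ x ∈ X, ρ(x) ≤ λ · ρ̃(x) }). -/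
/-- **One-shot analog of the Kawai–Parrondo–Van den Broeck relation (Theorem 1).**
For a classical process with phase-space densities `ρ` (forward) and `ρt`
(momentum-reversed reverse), both supported exactly on `S`, satisfying the
generalized Crooks relation `exp (β (W x − ΔF)) = ρ x / ρt x` on `S`, with `W`
bounded above on `S`, the worst-case dissipated work `sSup {W x − ΔF : x ∈ S}`
equals `(1/β)` times the order-∞ Rényi divergence
`D_∞(ρ‖ρt) = log (sInf {λ | ∀ x, ρ x ≤ λ * ρt x})`. -/
theorem worst_case_dissipated_work_eq_renyi_div_phase_space
    {X : Type*} [Nonempty X] (S : Set X) (hS : S.Nonempty)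
    (ρ ρt W : X → ℝ) (β ΔF : ℝ) (hβ : 0 < β)
    (hpos : ∀ x ∈ S, 0 < ρ x ∧ 0 < ρt x)
    (hzero : ∀ x ∉ S, ρ x = 0 ∧ ρt x = 0)
    (hCrooks : ∀ x ∈ S, Real.exp (β * (W x - ΔF)) = ρ x / ρt x)
    (hbdd : BddAbove (W '' S)) :
    sSup {w : ℝ | ∃ x ∈ S, w = W x - ΔF}
      = (1 / β) * Real.log (sInf {l : ℝ | ∀ x, ρ x ≤ l * ρt x}) := by
  set A := {w : ℝ | ∃ x ∈ S, w = W x - ΔF} with hA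
  obtain ⟨x₀, hx₀⟩ := hS
  have hAne : A.Nonempty := ⟨W x₀ - ΔF, x₀, hx₀, rfl⟩
  have hAbdd : BddAbove A := by
    obtain ⟨b, hb⟩ := hbdd
    refine ⟨b - ΔF, ?_⟩
    rintro w ⟨x, hx, rfl⟩
    have := hb ⟨x, hx, rfl⟩
    linarith
  set M := sSup A with hM
  have hML : {l : ℝ | ∀ x, ρ x ≤ l * ρt x} = Set.Ici (Real.exp (β * M)) := by
    ext l
    constructor
    · intro hl
      have hl0 : 0 < l := by
        have h1 := hl x₀
        have h2 := (hpos x₀ hx₀).1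
        have h3 := (hpos x₀ hx₀).2
        nlinarith
      have key : ∀ w ∈ A, β * w ≤ Real.log l := by
        rintro w ⟨x, hx, rfl⟩
        have h := hl x
        have hρt := (hpos x hx).2
        have hle : Real.exp (β * (W x - ΔF)) ≤ l := by
          rw [hCrooks x hx, div_le_iff₀ hρt]; exact h
        calc β * (W x - ΔF) = Real.log (Real.exp (β * (W x - ΔF))) :=
              (Real.log_exp _).symm
          _ ≤ Real.log l := Real.log_le_log (Real.exp_pos _) hle
      have hMle : β * M ≤ Real.log l := by
        have h1 : M ≤ Real.log l / β := by
          refine csSup_le hAne fun w hw => ?_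
          have := key w hw
          rw [le_div_iff₀ hβ]; linarith
        calc β * M ≤ β * (Real.log l / β) := by nlinarith
          _ = Real.log l := by field_simp
      have := Real.exp_le_exp.mpr hMle
      rwa [Real.exp_log hl0] at this
    · intro hl x
      by_cases hx : x ∈ S
      · have hρt := (hpos x hx).2
        have hwM : W x - ΔF ≤ M := le_csSup hAbdd ⟨x, hx, rfl⟩
        have h1 : ρ x / ρt x ≤ Real.exp (β * M) := by
          rw [← hCrooks x hx]
          exact Real.exp_le_exp.mpr (by nlinarith)
        have h2 : ρ x / ρt x ≤ l := h1.trans hl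
        rwa [div_le_iff₀ hρt] at h2
      · obtain ⟨h1, h2⟩ := hzero x hx
        simp [h1, h2]
  rw [hML, csInf_Ici, Real.log_exp]
  field_simp
end

section
/- Let X be a nonempty set (phase space), let S ⊆ X be nonempty, let ρ, ρ̃ : X → ℝ, W : X → ℝ, and let β > 0 and ΔF ∈ ℝ. Assume: (i) ρ(x) > 0 and ρ̃(x) > 0 for all x ∈ S, and ρ(x) = ρ̃(x) = 0 for all x ∉ S; (ii) the generalized Crooks relation exp(β·(W(x) − ΔF)) = ρ(x)/ρ̃(x) holds for all x ∈ S; (iii) the function x ↦ W(x) is bounded below on S. Then the worst-case forfeited work equals (1/β) times the order-∞ Rényi divergence of ρ̃ from ρ: sSup { ΔF − W(x) : x ∈ S } = (1/β) · Real.log (sInf { λ : ℝ | ∀ x ∈ X, ρ̃(x) ≤ λ · ρ(x) }). -/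
/-- **Worst-case forfeited work from an order-∞ Rényi divergence (phase-space
version, Eq. (12) of the paper).** For a classical process with phase-space
densities `ρ` (forward) and `ρt` (momentum-reversed reverse), both supported
exactly on `S`, satisfying the generalized Crooks relation
`exp (β (W x − ΔF)) = ρ x / ρt x` on `S`, with `W` bounded below on `S`, the
worst-case forfeited work `sSup {ΔF − W x : x ∈ S}` equals `(1/β)` times the
order-∞ Rényi divergence `D_∞(ρt‖ρ) = log (sInf {λ | ∀ x, ρt x ≤ λ * ρ x})`. -/
theorem worst_case_forfeited_work_eq_renyi_div_phase_space
    {X : Type*} [Nonempty X] (S : Set X) (hS : S.Nonempty)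
    (ρ ρt W : X → ℝ) (β ΔF : ℝ) (hβ : 0 < β)
    (hpos : ∀ x ∈ S, 0 < ρ x ∧ 0 < ρt x)
    (hzero : ∀ x ∉ S, ρ x = 0 ∧ ρt x = 0)
    (hCrooks : ∀ x ∈ S, Real.exp (β * (W x - ΔF)) = ρ x / ρt x)
    (hbdd : BddBelow (W '' S)) :
    sSup {w : ℝ | ∃ x ∈ S, w = ΔF - W x}
      = (1 / β) * Real.log (sInf {l : ℝ | ∀ x, ρt x ≤ l * ρ x}) := by
  obtain ⟨b, hb⟩ := hbdd
  set A : Set ℝ := {w : ℝ | ∃ x ∈ S, w = ΔF - W x} with hA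
  have hAne : A.Nonempty := by
    obtain ⟨x, hx⟩ := hS
    exact ⟨ΔF - W x, x, hx, rfl⟩
  have hAbdd : BddAbove A := by
    refine ⟨ΔF - b, ?_⟩
    rintro w ⟨x, hx, rfl⟩
    have hbx : b ≤ W x := hb ⟨x, hx, rfl⟩
    linarith
  set M := sSup A with hM
  have hkey : ∀ x ∈ S, Real.exp (β * (ΔF - W x)) = ρt x / ρ x := by
    intro x hx
    have h1 := hCrooks x hx
    have hρ := (hpos x hx).1
    have hρt := (hpos x hx).2
    have h2 : Real.exp (β * (ΔF - W x)) = (Real.exp (β * (W x - ΔF)))⁻¹ := by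
      rw [← Real.exp_neg]; ring_nf
    rw [h2, h1]
    field_simp
  have hT : {l : ℝ | ∀ x, ρt x ≤ l * ρ x} = Set.Ici (Real.exp (β * M)) := by
    ext l
    simp only [Set.mem_setOf_eq, Set.mem_Ici]
    constructor
    · intro h
      have hl : ∀ x ∈ S, Real.exp (β * (ΔF - W x)) ≤ l := by
        intro x hx
        rw [hkey x hx, div_le_iff₀ (hpos x hx).1]
        exact h x
      obtain ⟨x0, hx0⟩ := hS
      have hlpos : 0 < l := lt_of_lt_of_le (Real.exp_pos _) (hl x0 hx0)
      have hMle : M ≤ Real.log l / β := by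
        apply csSup_le hAne
        rintro w ⟨x, hx, rfl⟩
        have h3 : β * (ΔF - W x) ≤ Real.log l :=
          (Real.le_log_iff_exp_le hlpos).mpr (hl x hx)
        rw [le_div_iff₀ hβ]
        linarith
      have h4 : β * M ≤ Real.log l := by
        rw [le_div_iff₀ hβ] at hMle; linarith
      calc Real.exp (β * M) ≤ Real.exp (Real.log l) := Real.exp_le_exp.mpr h4
        _ = l := Real.exp_log hlpos
    · intro h x
      by_cases hx : x ∈ S
      · have hle : ΔF - W x ≤ M := le_csSup hAbdd ⟨x, hx, rfl⟩
        have h5 : ρt x / ρ x ≤ l := by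
          rw [← hkey x hx]
          exact le_trans (Real.exp_le_exp.mpr (by nlinarith)) h
        rw [div_le_iff₀ (hpos x hx).1] at h5
        linarith [h5]
      · rw [(hzero x hx).1, (hzero x hx).2, mul_zero]
  rw [hT, csInf_Ici, Real.log_exp]
  field_simp
end

section
/- Let n ≥ 1, let H = EuclideanSpace ℂ (Fin n), let e, f : Fin n → H be orthonormal bases (the eigenbases of the initial Hamiltonian H_{−τ} and final Hamiltonian H_{τ}), let U : H → H be a unitary (the forward time-evolution), let E, Ẽ : Fin n → ℝ be the corresponding energy eigenvalues, and let β > 0. Define Z₋ := Σ_i exp(−β·E i), Z₊ := Σ_j exp(−β·Ẽ j), ΔF := −(1/β)·Real.log (Z₊/Z₋), and thermal eigenvalue lists p i := exp(−β·E i)/Z₋ and p̃ j := exp(−β·Ẽ j)/Z₊. Let A := { (i,j) : ⟪U (e i), f j⟫ ≠ 0 }, and assume A is nonempty. Then the worst-case dissipated work over accessible transitions equals (1/β) times the order-∞ Rényi divergence: max over (i,j) ∈ A of (Ẽ j − E i − ΔF) = (1/β) · Real.log (max over (i,j) ∈ A of (p i / p̃ j)). -/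
open scoped InnerProductSpace BigOperators

/-- **One-shot dissipated work for quantum states (Theorem 2).**
Let `e`, `f` be the eigenbases of the initial and final Hamiltonians with
eigenvalues `E`, `Et`, let `U` be the (unitary) forward time evolution, and let
`p`, `pt` be the Gibbs weights at inverse temperature `β` with partition
functions `Zm`, `Zp` and free-energy difference `ΔF = −(1/β) log (Zp/Zm)`.
Over the transitions `A` that are accessible (nonzero amplitude
`⟪U (e i), f j⟫`), the worst-case dissipated work
`max {Et j − E i − ΔF}` equals `(1/β)` times the order-∞ Rényi divergence
`log (max {p i / pt j})`. -/
theorem quantum_worst_case_dissipated_work_eq_renyi_div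
    (n : ℕ) (hn : 1 ≤ n)
    (e f : OrthonormalBasis (Fin n) ℂ (EuclideanSpace ℂ (Fin n)))
    (U : EuclideanSpace ℂ (Fin n) ≃ₗᵢ[ℂ] EuclideanSpace ℂ (Fin n))
    (E Et : Fin n → ℝ) (β : ℝ) (hβ : 0 < β)
    (Zm Zp ΔF : ℝ) (p pt : Fin n → ℝ)
    (hZm : Zm = ∑ i, Real.exp (-β * E i))
    (hZp : Zp = ∑ j, Real.exp (-β * Et j))
    (hΔF : ΔF = -(1 / β) * Real.log (Zp / Zm))
    (hp : ∀ i, p i = Real.exp (-β * E i) / Zm)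
    (hpt : ∀ j, pt j = Real.exp (-β * Et j) / Zp)
    (A : Set (Fin n × Fin n))
    (hA : A = {ij : Fin n × Fin n | ⟪U (e ij.1), f ij.2⟫_ℂ ≠ 0})
    (hAne : A.Nonempty) :
    sSup {w : ℝ | ∃ ij ∈ A, w = Et ij.2 - E ij.1 - ΔF}
      = (1 / β) * Real.log (sSup {r : ℝ | ∃ ij ∈ A, r = p ij.1 / pt ij.2}) := by
  have hβ' : β ≠ 0 := ne_of_gt hβ
  haveI : Nonempty (Fin n) := Fin.pos_iff_nonempty.mp hn
  have hZm0 : 0 < Zm := by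
    rw [hZm]
    exact Finset.sum_pos (fun i _ => Real.exp_pos _) Finset.univ_nonempty
  have hZp0 : 0 < Zp := by
    rw [hZp]
    exact Finset.sum_pos (fun i _ => Real.exp_pos _) Finset.univ_nonempty
  have hexpΔF : Real.exp (-β * ΔF) = Zp / Zm := by
    have : -β * ΔF = Real.log (Zp / Zm) := by
      rw [hΔF]; field_simp
    rw [this, Real.exp_log (div_pos hZp0 hZm0)]
  -- key pointwise identity
  have key : ∀ ij : Fin n × Fin n,
      p ij.1 / pt ij.2 = Real.exp (β * (Et ij.2 - E ij.1 - ΔF)) := by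
    intro ij
    rw [hp, hpt]
    have h1 : Real.exp (-β * E ij.1) / Zm / (Real.exp (-β * Et ij.2) / Zp)
        = Real.exp (-β * E ij.1) / Real.exp (-β * Et ij.2) * (Zp / Zm) := by
      field_simp
    rw [h1, ← Real.exp_sub, ← hexpΔF, ← Real.exp_add]
    ring_nf
  set S : Set ℝ := {w : ℝ | ∃ ij ∈ A, w = Et ij.2 - E ij.1 - ΔF} with hS
  have hSim : S = (fun ij : Fin n × Fin n => Et ij.2 - E ij.1 - ΔF) '' A := by
    ext w; simp [hS, Set.mem_image, eq_comm]
  have hSfin : S.Finite := hSim ▸ (Set.toFinite A).image _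
  have hSne : S.Nonempty := by
    obtain ⟨ij, hij⟩ := hAne
    exact ⟨_, ij, hij, rfl⟩
  have hT : {r : ℝ | ∃ ij ∈ A, r = p ij.1 / pt ij.2}
      = (fun w => Real.exp (β * w)) '' S := by
    ext r
    constructor
    · rintro ⟨ij, hij, rfl⟩
      exact ⟨Et ij.2 - E ij.1 - ΔF, ⟨ij, hij, rfl⟩, (key ij).symm⟩
    · rintro ⟨w, ⟨ij, hij, rfl⟩, rfl⟩
      exact ⟨ij, hij, (key ij).symm⟩
  set m := sSup S with hm
  have hmS : m ∈ S := hSne.csSup_mem hSfin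
  have hub : ∀ x ∈ S, x ≤ m := fun x hx => le_csSup hSfin.bddAbove hx
  have hTg : IsGreatest ((fun w => Real.exp (β * w)) '' S) (Real.exp (β * m)) := by
    constructor
    · exact ⟨m, hmS, rfl⟩
    · rintro r ⟨w, hw, rfl⟩
      exact Real.exp_le_exp.mpr (mul_le_mul_of_nonneg_left (hub w hw) hβ.le)
  rw [hT, hTg.csSup_eq, Real.log_exp]
  field_simp
end

section
/- Let P_fwd, P_rev : ℝ → ℝ, β > 0, ΔF ∈ ℝ. Assume: (i) P_fwd(W) ≥ 0 and P_rev(W) ≥ 0 for all W; (ii) Crooks' theorem holds pointwise: P_fwd(W) = exp(β·(W − ΔF)) · P_rev(−W) for all W ∈ ℝ; (iii) the support S := { W : P_fwd(W) ≠ 0 } is nonempty and bounded. Then the worst-case dissipated work equals (1/β) times the order-∞ Rényi divergence of P_fwd(W) from P_rev(−W): (sSup S) − ΔF = (1/β) · Real.log (sInf { λ : ℝ | ∀ W, P_fwd(W) ≤ λ · P_rev(−W) }). -/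
/-- **One-shot dissipated work from work distributions (Theorem 3).**
If the forward and reverse work distributions `Pf`, `Pr` are nonnegative and
satisfy Crooks' theorem `Pf W = exp (β (W − ΔF)) * Pr (−W)` pointwise, and the
set `S = {W | Pf W ≠ 0}` of possible work values is nonempty and bounded, then
the worst-case dissipated work `sSup S − ΔF` equals `(1/β)` times the order-∞
Rényi divergence
`D_∞(Pf(W) ‖ Pr(−W)) = log (sInf {λ | ∀ W, Pf W ≤ λ * Pr (−W)})`. -/
theorem worst_case_dissipated_work_eq_renyi_div_work_dist
    (Pf Pr : ℝ → ℝ) (β ΔF : ℝ) (hβ : 0 < β)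
    (hPf : ∀ w, 0 ≤ Pf w) (hPr : ∀ w, 0 ≤ Pr w)
    (hCrooks : ∀ w, Pf w = Real.exp (β * (w - ΔF)) * Pr (-w))
    (hne : {w : ℝ | Pf w ≠ 0}.Nonempty)
    (hbdd : Bornology.IsBounded {w : ℝ | Pf w ≠ 0}) :
    sSup {w : ℝ | Pf w ≠ 0} - ΔF
      = (1 / β) * Real.log (sInf {l : ℝ | ∀ w, Pf w ≤ l * Pr (-w)}) := by
  set S := {w : ℝ | Pf w ≠ 0} with hS
  set f : ℝ → ℝ := fun w => Real.exp (β * (w - ΔF)) with hf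
  have hmono : Monotone f := fun a b hab => by
    apply Real.exp_le_exp.2
    nlinarith
  have hbddA : BddAbove S := hbdd.bddAbove
  -- Pr (-w) > 0 for w ∈ S
  have hPrpos : ∀ w ∈ S, 0 < Pr (-w) := by
    intro w hw
    rcases lt_or_eq_of_le (hPr (-w)) with h | h
    · exact h
    · exfalso; apply hw; rw [hCrooks w, ← h, mul_zero]
  -- The set L equals the upper bounds of f '' S
  have hL : {l : ℝ | ∀ w, Pf w ≤ l * Pr (-w)} = upperBounds (f '' S) := by
    ext l
    constructor
    · rintro hl _ ⟨w, hw, rfl⟩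
      have hp := hPrpos w hw
      have := hl w
      rw [hCrooks w] at this
      exact le_of_mul_le_mul_right (by linarith [this]) hp
    · intro hl w
      by_cases hw : Pf w = 0
      · rw [hw]
        obtain ⟨w0, hw0⟩ := hne
        have hl0 : 0 < l := lt_of_lt_of_le (Real.exp_pos _)
          (hl ⟨w0, hw0, rfl⟩)
        exact mul_nonneg hl0.le (hPr _)
      · have hfw : f w ≤ l := hl ⟨w, hw, rfl⟩
        rw [hCrooks w]
        exact mul_le_mul_of_nonneg_right hfw (hPr _) |>.trans_eq rfl
  have himg : sSup (f '' S) = f (sSup S) :=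
    (Monotone.map_csSup_of_continuousAt (Real.continuous_exp.comp (by continuity)).continuousAt
      hmono hne hbddA).symm
  have hlub : IsLUB (f '' S) (sSup (f '' S)) :=
    isLUB_csSup (hne.image f) (hmono.map_bddAbove hbddA)
  rw [hL, hlub.upperBounds_eq, csInf_Ici, himg, hf]
  simp only [Real.log_exp]
  field_simp
end

section
/- Let P_fwd, P_rev : ℝ → ℝ, β > 0, ΔF ∈ ℝ. Assume: (i) P_fwd(W) ≥ 0 and P_rev(W) ≥ 0 for all W; (ii) Crooks' theorem holds pointwise: P_fwd(W) = exp(β·(W − ΔF)) · P_rev(−W) for all W ∈ ℝ; (iii) the support S := { W : P_fwd(W) ≠ 0 } is nonempty and bounded. Then the worst-case forfeited work equals (1/β) times the order-∞ Rényi divergence of P_rev(−W) from P_fwd(W): ΔF − (sInf S) = (1/β) · Real.log (sInf { λ : ℝ | ∀ W, P_rev(−W) ≤ λ · P_fwd(W) }). -/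
/-! On the support of `P_fwd`, Crooks' theorem makes the likelihood ratio
`P_rev(−W) / P_fwd(W) = exp (β (ΔF − W))`. The admissible constants `λ` of `D_∞` are
therefore exactly the upper bounds of this ratio on the support, whose least element is
attained at the smallest possible work `W_min`, since the ratio is decreasing in `W`. -/

open Set Real

lemma setOf_forall_mul_le_mul_eq_upperBounds {α : Type*} (g P : α → ℝ) (hP : ∀ x, 0 ≤ P x) :
    {l : ℝ | ∀ x, g x * P x ≤ l * P x} = upperBounds (g '' {x | P x ≠ 0}) := by
  ext l
  simp only [mem_ofPred_eq, mem_upperBounds, forall_mem_image]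
  refine forall_congr' fun x => ?_
  rcases (hP x).eq_or_lt with hx | hx
  · simp [← hx]
  · simp [hx.ne', mul_le_mul_iff_left₀ hx]

lemma sInf_setOf_forall_mul_le_mul_eq_sSup {α : Type*} (g P : α → ℝ) (hP : ∀ x, 0 ≤ P x)
    (hne : {x | P x ≠ 0}.Nonempty) (hbdd : BddAbove (g '' {x | P x ≠ 0})) :
    sInf {l : ℝ | ∀ x, g x * P x ≤ l * P x} = sSup (g '' {x | P x ≠ 0}) := by
  rw [setOf_forall_mul_le_mul_eq_upperBounds g P hP]
  exact csInf_upperBounds_eq_csSup hbdd (hne.image g)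

lemma reverse_eq_exp_mul_forward_of_crooks {Pf Pr : ℝ → ℝ} {β ΔF : ℝ}
    (hCrooks : ∀ w, Pf w = exp (β * (w - ΔF)) * Pr (-w)) (w : ℝ) :
    Pr (-w) = exp (β * (ΔF - w)) * Pf w := by
  rw [hCrooks w, ← mul_assoc, ← exp_add, show β * (ΔF - w) + β * (w - ΔF) = 0 by ring,
    exp_zero, one_mul]

lemma antitone_exp_mul_sub {β : ℝ} (hβ : 0 ≤ β) (c : ℝ) :
    Antitone fun w : ℝ => exp (β * (c - w)) :=
  exp_monotone.comp_antitone fun _ _ h => mul_le_mul_of_nonneg_left (by linarith) hβ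

theorem worst_case_forfeited_work_eq_renyi_div_work_dist_general
    (Pf Pr : ℝ → ℝ) (β ΔF : ℝ) (hβ : 0 < β)
    (hPf : ∀ w, 0 ≤ Pf w)
    (hCrooks : ∀ w, Pf w = Real.exp (β * (w - ΔF)) * Pr (-w))
    (hne : {w : ℝ | Pf w ≠ 0}.Nonempty)
    (hbdd : Bornology.IsBounded {w : ℝ | Pf w ≠ 0}) :
    ΔF - sInf {w : ℝ | Pf w ≠ 0}
      = (1 / β) * Real.log (sInf {l : ℝ | ∀ w, Pr (-w) ≤ l * Pf w}) := by
  set ratio : ℝ → ℝ := fun w => exp (β * (ΔF - w))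
  have hanti : Antitone ratio := antitone_exp_mul_sub hβ.le ΔF
  have hbddBelow := hbdd.bddBelow
  have hsup : ratio (sInf {w | Pf w ≠ 0}) = sSup (ratio '' {w | Pf w ≠ 0}) :=
    hanti.map_csInf_of_continuousAt (by fun_prop) hne hbddBelow
  simp_rw [reverse_eq_exp_mul_forward_of_crooks hCrooks]
  rw [sInf_setOf_forall_mul_le_mul_eq_sSup ratio Pf hPf hne (hanti.map_bddBelow hbddBelow),
    ← hsup, log_exp]
  field_simp

/-- **Worst-case forfeited work from work distributions (Eq. (22) of the
paper).** If the forward and reverse work distributions `Pf`, `Pr` are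
nonnegative and satisfy Crooks' theorem `Pf W = exp (β (W − ΔF)) * Pr (−W)`
pointwise, and the set `S = {W | Pf W ≠ 0}` of possible work values is nonempty
and bounded, then the worst-case forfeited work `ΔF − sInf S` equals `(1/β)`
times the order-∞ Rényi divergence
`D_∞(Pr(−W) ‖ Pf(W)) = log (sInf {λ | ∀ W, Pr (−W) ≤ λ * Pf W})`. -/
theorem worst_case_forfeited_work_eq_renyi_div_work_dist
    (Pf Pr : ℝ → ℝ) (β ΔF : ℝ) (hβ : 0 < β)
    (hPf : ∀ w, 0 ≤ Pf w) (hPr : ∀ w, 0 ≤ Pr w)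
    (hCrooks : ∀ w, Pf w = Real.exp (β * (w - ΔF)) * Pr (-w))
    (hne : {w : ℝ | Pf w ≠ 0}.Nonempty)
    (hbdd : Bornology.IsBounded {w : ℝ | Pf w ≠ 0}) :
    ΔF - sInf {w : ℝ | Pf w ≠ 0}
      = (1 / β) * Real.log (sInf {l : ℝ | ∀ w, Pr (-w) ≤ l * Pf w}) :=
  worst_case_forfeited_work_eq_renyi_div_work_dist_general Pf Pr β ΔF hβ hPf hCrooks hne hbdd
end

section
/- Let (X, μ) be a measure space, let ρ, ρ̃ : X → ℝ and W : X → ℝ be measurable, let β > 0 and ΔF ∈ ℝ. Assume: (i) ρ(x) ≥ 0 and ρ̃(x) ≥ 0 for all x; (ii) the generalized Crooks relation exp(β·(W(x) − ΔF)) = ρ(x)/ρ̃(x) holds for all x with ρ̃(x) > 0, and ρ(x) = 0 whenever ρ̃(x) = 0; (iii) the function x ↦ W(x)·ρ(x) is μ-integrable and ρ integrates to 1 with respect to μ. Then the average dissipated work equals (1/β) times the Kullback–Leibler divergence of ρ from ρ̃: (∫ W(x)·ρ(x) dμ) − ΔF = (1/β) · ∫ g(x) dμ, where g(x) := ρ(x)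 · Real.log (ρ(x)/ρ̃(x)) when ρ(x) > 0 and g(x) := 0 when ρ(x) = 0. -/
open MeasureTheory

/-- **Average dissipated work from the KL divergence between phase-space
densities (Kawai–Parrondo–Van den Broeck, Eq. (8) of the paper).**
Let `ρ` be the forward phase-space density (normalized w.r.t. `μ`) and `ρt`
the momentum-reversed reverse density, with the generalized Crooks relation
`exp (β (W x − ΔF)) = ρ x / ρt x` on the support of `ρt` and
`supp ρ ⊆ supp ρt`. If `x ↦ W x * ρ x` is `μ`-integrable, the average
dissipated work `∫ W ρ dμ − ΔF` equals `(1/β)` times the KL divergence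
`D(ρ‖ρt) = ∫ ρ * log (ρ/ρt) dμ` (integrand `0` where `ρ` vanishes). -/
theorem avg_dissipated_work_eq_kl_div_phase_space
    {X : Type*} [MeasurableSpace X] (μ : Measure X)
    (ρ ρt W : X → ℝ)
    (hρm : Measurable ρ) (hρtm : Measurable ρt) (hWm : Measurable W)
    (β ΔF : ℝ) (hβ : 0 < β)
    (hρ0 : ∀ x, 0 ≤ ρ x) (hρt0 : ∀ x, 0 ≤ ρt x)
    (hCrooks : ∀ x, 0 < ρt x → Real.exp (β * (W x - ΔF)) = ρ x / ρt x)
    (hsupp : ∀ x, ρt x = 0 → ρ x = 0)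
    (hint : Integrable (fun x => W x * ρ x) μ)
    (hnorm : ∫ x, ρ x ∂μ = 1) :
    (∫ x, W x * ρ x ∂μ) - ΔF
      = (1 / β) * ∫ x, (if 0 < ρ x then ρ x * Real.log (ρ x / ρt x) else 0) ∂μ := by
  have hρint : Integrable ρ μ := by
    by_contra h
    rw [integral_undef h] at hnorm
    norm_num at hnorm
  have hpt : ∀ x, (if 0 < ρ x then ρ x * Real.log (ρ x / ρt x) else 0)
      = β * (W x * ρ x - ΔF * ρ x) := by
    intro x
    by_cases hx : 0 < ρ x
    · have hρtpos : 0 < ρt x := by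
        rcases (hρt0 x).lt_or_eq with h | h
        · exact h
        · exact absurd (hsupp x h.symm) (by linarith)
      have := hCrooks x hρtpos
      have hlog : Real.log (ρ x / ρt x) = β * (W x - ΔF) := by
        rw [← this, Real.log_exp]
      rw [if_pos hx, hlog]; ring
    · have : ρ x = 0 := le_antisymm (not_lt.mp hx) (hρ0 x)
      rw [if_neg hx, this]; ring
  have hcongr : ∫ x, (if 0 < ρ x then ρ x * Real.log (ρ x / ρt x) else 0) ∂μ
      = ∫ x, β * (W x * ρ x - ΔF * ρ x) ∂μ := by
    exact integral_congr_ae (Filter.Eventually.of_forall hpt)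
  rw [hcongr, integral_const_mul, integral_sub hint (hρint.const_mul ΔF),
    integral_const_mul, hnorm]
  field_simp
end

section
/- Let P_fwd, P_rev : ℝ → ℝ be measurable functions, β > 0, ΔF ∈ ℝ. Assume: (i) P_fwd(W) ≥ 0 and P_rev(W) ≥ 0 for all W; (ii) Crooks' theorem holds pointwise: P_fwd(W) = exp(β·(W − ΔF)) · P_rev(−W) for all W ∈ ℝ; (iii) both P_fwd and P_rev integrate to 1 over ℝ with respect to Lebesgue measure; (iv) the support S := { W : P_fwd(W) ≠ 0 } is bounded above. Then the worst-case dissipated work is nonnegative: sSup S ≥ ΔF. -/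
open MeasureTheory

/-- **Nonnegativity of the worst-case dissipated work (one-shot Second Law).**
If the forward and reverse work distributions `Pf`, `Pr` are measurable,
nonnegative, normalized probability densities satisfying Crooks' theorem
`Pf W = exp (β (W − ΔF)) * Pr (−W)` pointwise, and the support
`S = {W | Pf W ≠ 0}` is bounded above, then the worst-case dissipated work is
nonnegative: `sSup S ≥ ΔF`. -/
theorem worst_case_dissipated_work_nonneg
    (Pf Pr : ℝ → ℝ) (hmf : Measurable Pf) (hmr : Measurable Pr)
    (β ΔF : ℝ) (hβ : 0 < β)
    (hPf : ∀ w, 0 ≤ Pf w) (hPr : ∀ w, 0 ≤ Pr w)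
    (hCrooks : ∀ w, Pf w = Real.exp (β * (w - ΔF)) * Pr (-w))
    (hnormf : ∫ w, Pf w = 1) (hnormr : ∫ w, Pr w = 1)
    (hbdd : BddAbove {w : ℝ | Pf w ≠ 0}) :
    ΔF ≤ sSup {w : ℝ | Pf w ≠ 0} := by
  by_contra h
  push_neg at h
  set M := sSup {w : ℝ | Pf w ≠ 0} with hM
  set c := Real.exp (β * (M - ΔF)) with hc
  have hclt : c < 1 := by
    rw [hc, Real.exp_lt_one_iff]
    have : M - ΔF < 0 := by linarith
    nlinarith
  -- integrability
  have hif : Integrable Pf := by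
    by_contra hni
    rw [integral_undef hni] at hnormf
    norm_num at hnormf
  have hir : Integrable Pr := by
    by_contra hni
    rw [integral_undef hni] at hnormr
    norm_num at hnormr
  have hirn : Integrable (fun w => Pr (-w)) := hir.comp_neg
  have hle : ∀ w, Pf w ≤ c * Pr (-w) := by
    intro w
    by_cases hw : Pf w = 0
    · rw [hw]
      exact mul_nonneg (Real.exp_nonneg _) (hPr _)
    · have hwM : w ≤ M := le_csSup hbdd hw
      rw [hCrooks w]
      apply mul_le_mul_of_nonneg_right _ (hPr _)
      exact Real.exp_le_exp.mpr (by nlinarith)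
  have hmono : ∫ w, Pf w ≤ ∫ w, c * Pr (-w) :=
    integral_mono hif (hirn.const_mul c) hle
  have : ∫ w, c * Pr (-w) = c := by
    rw [integral_const_mul, integral_neg_eq_self Pr, hnormr, mul_one]
  rw [hnormf, this] at hmono
  linarith
end
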